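/- Comparison of χ and iSWAP gadgets (eq:iSWAP-U(4)): let T_iSWAP = M(5/9, 1/3), i.e. the symmetric 4×4 matrix with rows (1,0,0,0), (0, 0, 1/3, 2√3/9), (0, 1/3, 0, 2√3/9), (0, 2√3/9, 2√3/9, 5/9), and let T_χ = M(3/5, 1/5), i.e. the matrix with rows (1,0,0,0), (0, 1/5, 1/5, √3/5), (0, 1/5, 1/5, √3/5), (0, √3/5, √3/5, 3/5). Then both (I − T_χ) − (3/4)(I − T_iSWAP) and T_χ − T_iSWAP are positive semidefinite; i.e. (3/4)(I − T_iSWAP) ⪯ (I − T_χ) ⪯ (I − T_iSWAP) in the Loewner order. -/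

import Mathlib

open Matrix

/-- The matrix representation `M(a,c)` of the second moment operator of an ironed gadget. -/
noncomputable def gadgetMatrix (a c : ℝ) : Matrix (Fin 4) (Fin 4) ℝ :=
  !![1, 0, 0, 0;
     0, 1 - c - (3/2) * (1 - a), c, (Real.sqrt 3 / 2) * (1 - a);
     0, c, 1 - c - (3/2) * (1 - a), (Real.sqrt 3 / 2) * (1 - a);
     0, (Real.sqrt 3 / 2) * (1 - a), (Real.sqrt 3 / 2) * (1 - a), a]

/-- The second-moment matrix of the iSWAP gadget, `T_iSWAP = M(5/9, 1/3)`. -/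
noncomputable def TiSWAP : Matrix (Fin 4) (Fin 4) ℝ := gadgetMatrix (5/9) (1/3)

/-- The second-moment matrix of the χ gadget, `T_χ = M(3/5, 1/5)`. -/
noncomputable def Tchi : Matrix (Fin 4) (Fin 4) ℝ := gadgetMatrix (3/5) (1/5)

/-!
Every `I - M(a,c)` is the combination `α w wᵀ + β z zᵀ` of the same two rank-one matrices, for
the orthogonal vectors `w = antisymVec = (0, 1, -1, 0)` and `z = symVec = (0, √3/2, √3/2, -1)`,
with coefficients `c + 3(1-a)/4` and `1 - a`. Loewner comparisons between them therefore reduce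
to comparing these two coefficients, which are `(1/2, 2/5)` for `T_χ` and `(2/3, 4/9)` for
`T_iSWAP`.
-/

namespace gadgetMatrix

def antisymVec : Fin 4 → ℝ := ![0, 1, -1, 0]

noncomputable def symVec : Fin 4 → ℝ := ![0, Real.sqrt 3 / 2, Real.sqrt 3 / 2, -1]

theorem one_sub_eq (a c : ℝ) :
    1 - gadgetMatrix a c =
      (c + 3/4 * (1 - a)) • vecMulVec antisymVec antisymVec +
        (1 - a) • vecMulVec symVec symVec := by
  have h3 : Real.sqrt 3 ^ 2 = 3 := Real.sq_sqrt (by norm_num)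
  ext i j
  fin_cases i <;> fin_cases j <;> simp [gadgetMatrix, antisymVec, symVec, one_apply] <;>
    first | ring1 | linear_combination (a - 1) / 4 * h3

theorem posSemidef_one_sub_sub_smul_one_sub {a c a' c' t : ℝ}
    (hanti : t * (c' + 3/4 * (1 - a')) ≤ c + 3/4 * (1 - a)) (hsym : t * (1 - a') ≤ 1 - a) :
    ((1 - gadgetMatrix a c) - t • (1 - gadgetMatrix a' c')).PosSemidef := by
  have hdecomp : (1 - gadgetMatrix a c) - t • (1 - gadgetMatrix a' c') =
      (c + 3/4 * (1 - a) - t * (c' + 3/4 * (1 - a'))) • vecMulVec antisymVec antisymVec +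
        (1 - a - t * (1 - a')) • vecMulVec symVec symVec := by
    rw [one_sub_eq, one_sub_eq]
    module
  rw [hdecomp]
  exact ((posSemidef_vecMulVec_self_star _).smul (sub_nonneg.2 hanti)).add
    ((posSemidef_vecMulVec_self_star _).smul (sub_nonneg.2 hsym))

end gadgetMatrix

/-- **Comparison of the χ and iSWAP gadgets** (Eq. (eq:iSWAP-U(4))): both
`(I − T_χ) − (3/4)(I − T_iSWAP)` and `T_χ − T_iSWAP` are positive semidefinite, i.e.
`(3/4)(I − T_iSWAP) ⪯ (I − T_χ) ⪯ (I − T_iSWAP)` in the Loewner order. -/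
theorem chi_vs_iSWAP_loewner :
    ((1 - Tchi) - (3/4 : ℝ) • (1 - TiSWAP)).PosSemidef ∧
    (Tchi - TiSWAP).PosSemidef := by
  have hdiff : Tchi - TiSWAP = (1 - TiSWAP) - (1 : ℝ) • (1 - Tchi) := by
    rw [one_smul, sub_sub_sub_cancel_left]
  rw [hdiff]
  exact ⟨gadgetMatrix.posSemidef_one_sub_sub_smul_one_sub (by norm_num) (by norm_num),
    gadgetMatrix.posSemidef_one_sub_sub_smul_one_sub (by norm_num) (by norm_num)⟩
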